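/- Let μ ≥ 1 be an integer and let p₁ satisfy 1/(2^{μ+1} − 1) ≤ p₁ < 2^{−μ}. Define the source p on n = 2^{μ+1} − 1 symbols by p(1) = p₁ and p(i) = (1 − p₁)/(2^{μ+1} − 2) for 2 ≤ i ≤ n. Then p is a monotonically nonincreasing probability mass function and R*_opt(p) = lg((1 − p₁)/(1 − 2^{−μ})). -/

import Mathlib

/-!
The optimal code gives the heavy symbol length `μ` and the `2 ^ (μ + 1) - 2` light ones length
`μ + 1`; this meets the Kraft inequality with equality, and `p₁ < 2 ^ (-μ)` makes the light
symbols carry the maximal redundancy `μ + 1 + lg q`, where `q` is their common probability.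
No code does better: a redundancy below `μ + 1 + lg q` forces every light symbol to length at
most `μ`, and at least `2 ^ μ` such codewords already exhaust the Kraft budget, leaving none
for the heavy symbol.
-/

/-- A source: a positive, monotonically nonincreasing probability mass function on `Fin n`. -/
def IsSource (n : ℕ) (p : Fin n → ℝ) : Prop :=
  (∀ i, 0 < p i) ∧ (∑ i, p i = 1) ∧ (∀ i j : Fin n, i ≤ j → p j ≤ p i)

/-- A codeword-length vector: positive integer lengths satisfying the Kraft inequality. -/
def IsCLV (n : ℕ) (l : Fin n → ℤ) : Prop :=
  (∀ i, 1 ≤ l i) ∧ (∑ i, (2:ℝ) ^ (-(l i)) ≤ 1)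

/-- Maximum pointwise redundancy `R*(l,p) = max_i (l(i) + lg p(i))`. -/
noncomputable def Rstar (n : ℕ) (l : Fin n → ℤ) (p : Fin n → ℝ) : ℝ :=
  ⨆ i : Fin n, ((l i : ℝ) + Real.logb 2 (p i))

/-- Minimum maximum pointwise redundancy over all codeword-length vectors. -/
noncomputable def RstarOpt (n : ℕ) (p : Fin n → ℝ) : ℝ :=
  sInf {r : ℝ | ∃ l : Fin n → ℤ, IsCLV n l ∧ Rstar n l p = r}

open Finset Real

lemma sum_eq_add_card_sub_one_mul {ι : Type*} [Fintype ι] (f : ι → ℝ) {j : ι} {c : ℝ}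
    (hf : ∀ i ≠ j, f i = c) : ∑ i, f i = f j + (Fintype.card ι - 1 : ℝ) * c := by
  classical
  rw [← add_sum_erase _ _ (mem_univ j), sum_congr rfl fun i hi => hf i (ne_of_mem_erase hi),
    sum_const, card_erase_of_mem (mem_univ j), card_univ, nsmul_eq_mul,
    Nat.cast_sub (Fintype.card_pos_iff.mpr ⟨j⟩), Nat.cast_one]

lemma exists_lt_of_kraft {ι : Type*} [Fintype ι] {l : ι → ℤ}
    (hl : ∑ i, (2:ℝ) ^ (-l i) ≤ 1) {s : Finset ι} {j : ι} (hj : j ∉ s) {k : ℕ}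
    (hs : 2 ^ k ≤ #s) : ∃ i ∈ s, (k:ℤ) < l i := by
  by_contra! h
  have hs_sum : 1 ≤ ∑ i ∈ s, (2:ℝ) ^ (-l i) :=
    calc (1:ℝ) = 2 ^ k * (2:ℝ) ^ (-(k:ℤ)) := by simp
      _ ≤ #s * (2:ℝ) ^ (-(k:ℤ)) := by gcongr; exact_mod_cast hs
      _ ≤ ∑ i ∈ s, (2:ℝ) ^ (-l i) := by
        rw [← nsmul_eq_mul]
        exact card_nsmul_le_sum _ _ _ fun i hi =>
          zpow_le_zpow_right₀ one_le_two (neg_le_neg (h i hi))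
  have := sum_lt_sum_of_subset (subset_univ s) (mem_univ j) hj (by positivity)
    (f := fun i => (2:ℝ) ^ (-l i)) fun _ _ _ => by positivity
  linarith

section Rstar

variable {n : ℕ} {l : Fin n → ℤ} {p : Fin n → ℝ}

lemma le_Rstar (i : Fin n) : (l i : ℝ) + logb 2 (p i) ≤ Rstar n l p :=
  le_ciSup (f := fun i => (l i : ℝ) + logb 2 (p i)) (Set.finite_range _).bddAbove i

lemma Rstar_le [Nonempty (Fin n)] {r : ℝ} (h : ∀ i, (l i : ℝ) + logb 2 (p i) ≤ r) :
    Rstar n l p ≤ r :=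
  ciSup_le h

end Rstar

section OneHeavySymbol

variable {n μ : ℕ} {p : Fin n → ℝ} {j : Fin n} {a b : ℝ}

lemma isSource_of_eq_of_ne (hj : j.val = 0) (hb : 0 < b) (hba : b ≤ a) (hpj : p j = a)
    (hp : ∀ i ≠ j, p i = b) (hsum : a + (n - 1 : ℝ) * b = 1) : IsSource n p := by
  have hle : ∀ i, b ≤ p i := fun i => by
    rcases eq_or_ne i j with rfl | hi
    · exact hpj ▸ hba
    · exact (hp i hi).ge
  refine ⟨fun i => hb.trans_le (hle i), ?_, fun i k hik => ?_⟩
  · simpa [sum_eq_add_card_sub_one_mul p hp, hpj] using hsum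
  · rcases eq_or_ne k j with rfl | hk
    · rw [Fin.ext (by omega : i.val = k.val)]
    · exact hp k hk ▸ hle i

lemma isCLV_ite (hμ : 1 ≤ μ) (hn : n + 1 ≤ 2 ^ (μ + 1)) (j : Fin n) :
    IsCLV n fun i => if i = j then (μ:ℤ) else μ + 1 := by
  refine ⟨fun i => by dsimp only; split_ifs <;> omega, ?_⟩
  have hcard : (n - 1 : ℝ) ≤ 2 ^ (μ + 1) - 2 := by
    have : ((n + 1 : ℕ) : ℝ) ≤ 2 ^ (μ + 1) := by exact_mod_cast hn
    push_cast at this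
    linarith
  rw [sum_eq_add_card_sub_one_mul _ (j := j) (c := (2:ℝ) ^ (-((μ:ℤ) + 1)))
    fun i hi => by simp only [if_neg hi], Fintype.card_fin]
  simp only [if_pos]
  calc (2:ℝ) ^ (-(μ:ℤ)) + (n - 1) * 2 ^ (-((μ:ℤ) + 1))
      ≤ 2 ^ (-(μ:ℤ)) + (2 ^ (μ + 1) - 2) * 2 ^ (-((μ:ℤ) + 1)) := by gcongr
    _ = 1 := by
      rw [zpow_neg, zpow_neg, zpow_natCast, ← Nat.cast_succ, zpow_natCast]
      field_simp
      ring

lemma le_Rstar_of_isCLV (hn : 2 ^ μ + 1 ≤ n) (hp : ∀ i ≠ j, p i = b) {l : Fin n → ℤ}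
    (hl : IsCLV n l) : μ + 1 + logb 2 b ≤ Rstar n l p := by
  classical
  obtain ⟨i, hi, hli⟩ := exists_lt_of_kraft hl.2 (notMem_erase j univ) (k := μ)
    (by rw [card_erase_of_mem (mem_univ j), card_univ, Fintype.card_fin]; omega)
  calc μ + 1 + logb 2 b ≤ l i + logb 2 (p i) := by
        rw [hp i (ne_of_mem_erase hi)]
        have : ((μ + 1 : ℤ) : ℝ) ≤ l i := by exact_mod_cast hli
        push_cast at this
        linarith
    _ ≤ Rstar n l p := le_Rstar i

lemma Rstar_ite (hn : 2 ≤ n) (ha : 0 < a) (hab : a ≤ 2 * b) (hpj : p j = a)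
    (hp : ∀ i ≠ j, p i = b) :
    Rstar n (fun i => if i = j then (μ:ℤ) else μ + 1) p = μ + 1 + logb 2 b := by
  have : Nonempty (Fin n) := ⟨j⟩
  have : Nontrivial (Fin n) := Fin.nontrivial_iff_two_le.mpr hn
  have hb : 0 < b := by linarith
  apply le_antisymm
  · refine Rstar_le fun i => ?_
    rcases eq_or_ne i j with rfl | hi
    · have : logb 2 a ≤ 1 + logb 2 b := by
        rw [← logb_self_eq_one one_lt_two, ← logb_mul two_ne_zero hb.ne']
        exact logb_le_logb_of_le one_lt_two ha hab
      simp only [if_pos, hpj]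
      push_cast
      linarith
    · simp [hi, hp i hi]
  · obtain ⟨i, hi⟩ := exists_ne j
    simpa [hi, hp i hi] using le_Rstar (l := fun i => if i = j then (μ:ℤ) else μ + 1) (p := p) i

theorem RstarOpt_eq_of_eq_of_ne (hn₁ : 2 ^ μ + 1 ≤ n) (hn₂ : n + 1 ≤ 2 ^ (μ + 1))
    (ha : 0 < a) (hab : a ≤ 2 * b) (hpj : p j = a) (hp : ∀ i ≠ j, p i = b) :
    RstarOpt n p = μ + 1 + logb 2 b := by
  have hμ : 1 ≤ μ := by
    by_contra! h
    simp [Nat.lt_one_iff.mp h] at hn₁ hn₂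
    omega
  refine IsLeast.csInf_eq ⟨⟨_, isCLV_ite hμ hn₂ j, Rstar_ite (by omega) ha hab hpj hp⟩, ?_⟩
  rintro r ⟨l, hl, rfl⟩
  exact le_Rstar_of_isCLV hn₁ hp hl

end OneHeavySymbol

lemma div_one_sub_two_zpow_neg (x : ℝ) (μ : ℕ) :
    x / (1 - (2:ℝ) ^ (-(μ:ℤ))) = 2 ^ (μ + 1) * (x / (2 ^ (μ + 1) - 2)) := by
  have : 1 - (2:ℝ) ^ (-(μ:ℤ)) = (2 ^ (μ + 1) - 2) / 2 ^ (μ + 1) := by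
    rw [zpow_neg, zpow_natCast, pow_succ]
    field_simp
  rw [this, div_div_eq_mul_div]
  ring

theorem stmt13 (μ : ℕ) (hμ : 1 ≤ μ) (p₁ : ℝ)
    (h1 : 1 / ((2:ℝ) ^ (μ + 1) - 1) ≤ p₁) (h2 : p₁ < (2:ℝ) ^ (-(μ:ℤ)))
    (p : Fin (2 ^ (μ + 1) - 1) → ℝ)
    (h0 : p ⟨0, by have := Nat.one_lt_two_pow_iff.mpr (by omega : μ + 1 ≠ 0); omega⟩ = p₁)
    (hrest : ∀ i : Fin (2 ^ (μ + 1) - 1), 0 < i.val →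
      p i = (1 - p₁) / ((2:ℝ) ^ (μ + 1) - 2)) :
    IsSource (2 ^ (μ + 1) - 1) p ∧
      RstarOpt (2 ^ (μ + 1) - 1) p =
        Real.logb 2 ((1 - p₁) / (1 - (2:ℝ) ^ (-(μ:ℤ)))) := by
  have hpow : 2 ≤ 2 ^ μ := Nat.le_self_pow (by omega) 2
  have hpow_succ : 2 ^ (μ + 1) = 2 * 2 ^ μ := by ring
  have hpowR : (2:ℝ) ≤ 2 ^ μ := by exact_mod_cast hpow
  have hcard : (((2 ^ (μ + 1) - 1 : ℕ) : ℝ) - 1) = 2 ^ (μ + 1) - 2 := by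
    rw [Nat.cast_sub Nat.one_le_two_pow]; push_cast; ring
  set q := (1 - p₁) / ((2:ℝ) ^ (μ + 1) - 2)
  have hD : (0:ℝ) < 2 ^ (μ + 1) - 2 := by rw [pow_succ]; linarith
  have hp₁_ge : 1 ≤ p₁ * (2 ^ (μ + 1) - 1) := (div_le_iff₀ (by linarith)).mp h1
  have hp₁_lt : p₁ * 2 ^ μ < 1 := by
    rwa [zpow_neg, zpow_natCast, ← one_div, lt_div_iff₀ (by positivity)] at h2
  have hq_le : q ≤ p₁ := by rw [div_le_iff₀ hD]; linarith
  have hp₁_le : p₁ ≤ 2 * q := by rw [mul_div_assoc', le_div_iff₀ hD, pow_succ]; nlinarith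
  have hp₁ : 0 < p₁ := lt_of_lt_of_le (one_div_pos.mpr (by linarith)) h1
  let j : Fin (2 ^ (μ + 1) - 1) := ⟨0, by omega⟩
  have hp : ∀ i ≠ j, p i = q := fun i hi => hrest i (Nat.pos_of_ne_zero (Fin.val_ne_of_ne hi))
  refine ⟨isSource_of_eq_of_ne rfl (by linarith) hq_le h0 hp ?_, ?_⟩
  · rw [hcard, mul_div_cancel₀ _ hD.ne']; ring
  · rw [RstarOpt_eq_of_eq_of_ne (μ := μ) (by omega) (by omega) hp₁ hp₁_le h0 hp,
      div_one_sub_two_zpow_neg, logb_mul (by positivity) (by linarith), logb_pow]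
    simp [q]
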